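/- arXiv:2006.02983 — 3 statements merged into one kernel-verified Lean document; each statement's English description precedes it below -/
import Mathlib

section
/- Let G, g : ℝ^k → ℝ be convex functions that are differentiable at all points. Suppose G is m-strongly convex for some m > 0 (i.e., ω ↦ G(ω) − (m/2)‖ω‖₂² is convex), ω₁ is a minimizer of G over ℝ^k, ω₂ is a minimizer of G + g over ℝ^k, and ‖∇g(ω)‖₂ ≤ g₁ for all ω ∈ ℝ^k. Then ‖ω₁ − ω₂‖₂ ≤ g₁/m. -/
/-!
Put `H ω = G ω - m / 2 * ‖ω‖ ^ 2`. Convexity of `H` makes its derivative monotone, which for `G`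
reads `m ‖ω₁ - ω₂‖² ≤ (G'(ω₁) - G'(ω₂)) (ω₁ - ω₂)`. At the minimizers `G'(ω₁) = 0` and
`G'(ω₂) = -g'(ω₂)`, so the right-hand side is `g'(ω₂) (ω₁ - ω₂) ≤ g₁ ‖ω₁ - ω₂‖`.
-/

open Set Filter InnerProductSpace RealInnerProductSpace

section FirstOrder

variable {E : Type*} [NormedAddCommGroup E] [NormedSpace ℝ E] {s : Set E} {f : E → ℝ}
  {f'x f'y : E →L[ℝ] ℝ} {x y : E}

/-- Restricting `f` to the line through `x` and `y` reduces this to the one-variable slope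
bound `ConvexOn.le_slope_of_hasDerivAt`. -/
theorem ConvexOn.hasFDerivAt_apply_sub_le (hf : ConvexOn ℝ s f) (hx : x ∈ s) (hy : y ∈ s)
    (hf' : HasFDerivAt f f'x x) : f'x (y - x) ≤ f y - f x := by
  set L : ℝ →ᵃ[ℝ] E := AffineMap.lineMap x y
  have hline : ConvexOn ℝ (L ⁻¹' s) (f ∘ L) := hf.comp_affineMap L
  have hderiv : HasDerivAt (f ∘ L) (f'x (y - x)) 0 := by
    refine HasFDerivAt.comp_hasDerivAt _ ?_ AffineMap.hasDerivAt_lineMap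
    rwa [AffineMap.lineMap_apply_zero]
  simpa [L, slope_def_field] using
    hline.le_slope_of_hasDerivAt (by simpa [L] using hx) (by simpa [L] using hy) one_pos hderiv

theorem ConvexOn.sub_apply_sub_nonneg_of_hasFDerivAt (hf : ConvexOn ℝ s f) (hx : x ∈ s)
    (hy : y ∈ s) (hf'x : HasFDerivAt f f'x x) (hf'y : HasFDerivAt f f'y y) :
    0 ≤ (f'x - f'y) (x - y) := by
  have hxy := hf.hasFDerivAt_apply_sub_le hx hy hf'x
  have hyx := hf.hasFDerivAt_apply_sub_le hy hx hf'y
  rw [← neg_sub x y, map_neg] at hxy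
  rw [sub_apply]
  linarith

end FirstOrder

section StrongConvexity

variable {E : Type*} [NormedAddCommGroup E] [InnerProductSpace ℝ E] {s : Set E} {f : E → ℝ}
  {f'x f'y : E →L[ℝ] ℝ} {x y : E} {m : ℝ}

/-- Monotonicity of the derivative `f' - m ⟪·, ·⟫` of the convex function
`x ↦ f x - m / 2 * ‖x‖ ^ 2`. -/
theorem StrongConvexOn.mul_norm_sub_sq_le (hf : StrongConvexOn s m f) (hx : x ∈ s) (hy : y ∈ s)
    (hf'x : HasFDerivAt f f'x x) (hf'y : HasFDerivAt f f'y y) :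
    m * ‖x - y‖ ^ 2 ≤ (f'x - f'y) (x - y) := by
  have hderiv : ∀ {z : E} {f'z : E →L[ℝ] ℝ}, HasFDerivAt f f'z z →
      HasFDerivAt (fun z ↦ f z - m / 2 * ‖z‖ ^ 2) (f'z - m • innerSL ℝ z) z := fun hz ↦ by
    refine (hz.sub ((hasFDerivAt_id _).norm_sq.const_mul (m / 2))).congr_fderiv ?_
    ext
    simp only [id_eq, ContinuousLinearMap.comp_id, sub_apply, smul_apply, coe_innerSL_apply,
      nsmul_eq_mul, Nat.cast_ofNat, smul_eq_mul]
    ring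
  have := (strongConvexOn_iff_convex.1 hf).sub_apply_sub_nonneg_of_hasFDerivAt hx hy
    (hderiv hf'x) (hderiv hf'y)
  simp only [sub_apply, smul_apply, innerSL_apply_apply, smul_eq_mul] at this ⊢
  rw [← real_inner_self_eq_norm_sq, inner_sub_left]
  linarith

end StrongConvexity

theorem fderiv_apply_le_of_norm_gradient_le {F : Type*} [NormedAddCommGroup F]
    [InnerProductSpace ℝ F] [CompleteSpace F] {f : F → ℝ} {x : F} {C : ℝ}
    (h : ‖gradient f x‖ ≤ C) (v : F) : fderiv ℝ f x v ≤ C * ‖v‖ := by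
  rw [← toDual_gradient, toDual_apply_apply]
  exact (real_inner_le_norm _ _).trans (by gcongr)

theorem strongly_convex_perturbation_general {k : ℕ}
    (G g : EuclideanSpace ℝ (Fin k) → ℝ)
    (hGdiff : Differentiable ℝ G) (hgdiff : Differentiable ℝ g)
    (m : ℝ) (hm : 0 < m)
    (hGstrong : ConvexOn ℝ Set.univ (fun ω => G ω - m / 2 * ‖ω‖ ^ 2))
    (g₁ : ℝ) (hgrad : ∀ ω, ‖gradient g ω‖ ≤ g₁)
    (ω₁ ω₂ : EuclideanSpace ℝ (Fin k))
    (hω₁ : IsMinOn G Set.univ ω₁)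
    (hω₂ : IsMinOn (fun ω => G ω + g ω) Set.univ ω₂) :
    ‖ω₁ - ω₂‖ ≤ g₁ / m := by
  have hG'₁ : fderiv ℝ G ω₁ = 0 := (hω₁.isLocalMin univ_mem).fderiv_eq_zero
  have hG'₂ : fderiv ℝ G ω₂ = -fderiv ℝ g ω₂ := by
    refine eq_neg_of_add_eq_zero_left ((hω₂.isLocalMin univ_mem).hasFDerivAt_eq_zero ?_)
    exact (hGdiff ω₂).hasFDerivAt.add (hgdiff ω₂).hasFDerivAt
  have hkey : m * ‖ω₁ - ω₂‖ ^ 2 ≤ g₁ * ‖ω₁ - ω₂‖ := calc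
    m * ‖ω₁ - ω₂‖ ^ 2 ≤ (fderiv ℝ G ω₁ - fderiv ℝ G ω₂) (ω₁ - ω₂) :=
      (strongConvexOn_iff_convex.2 hGstrong).mul_norm_sub_sq_le (mem_univ _) (mem_univ _)
        (hGdiff ω₁).hasFDerivAt (hGdiff ω₂).hasFDerivAt
    _ = fderiv ℝ g ω₂ (ω₁ - ω₂) := by simp [hG'₁, hG'₂]
    _ ≤ g₁ * ‖ω₁ - ω₂‖ := fderiv_apply_le_of_norm_gradient_le (hgrad ω₂) _
  have hg₁ : 0 ≤ g₁ := (norm_nonneg _).trans (hgrad ω₂)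
  rw [le_div_iff₀ hm]
  nlinarith [norm_nonneg (ω₁ - ω₂)]

/-- Lemma 1 (perturbation of strongly convex minimizers): if `G` is convex,
differentiable and `m`-strongly convex, `g` is convex and differentiable with
`‖∇g‖₂ ≤ g₁` everywhere, `ω₁` minimizes `G` and `ω₂` minimizes `G + g`, then
`‖ω₁ − ω₂‖₂ ≤ g₁ / m`. -/
theorem strongly_convex_perturbation {k : ℕ}
    (G g : EuclideanSpace ℝ (Fin k) → ℝ)
    (hGconv : ConvexOn ℝ Set.univ G) (hgconv : ConvexOn ℝ Set.univ g)
    (hGdiff : Differentiable ℝ G) (hgdiff : Differentiable ℝ g)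
    (m : ℝ) (hm : 0 < m)
    (hGstrong : ConvexOn ℝ Set.univ (fun ω => G ω - m / 2 * ‖ω‖ ^ 2))
    (g₁ : ℝ) (hgrad : ∀ ω, ‖gradient g ω‖ ≤ g₁)
    (ω₁ ω₂ : EuclideanSpace ℝ (Fin k))
    (hω₁ : IsMinOn G Set.univ ω₁)
    (hω₂ : IsMinOn (fun ω => G ω + g ω) Set.univ ω₂) :
    ‖ω₁ - ω₂‖ ≤ g₁ / m :=
  strongly_convex_perturbation_general G g hGdiff hgdiff m hm hGstrong g₁ hgrad ω₁ ω₂ hω₁ hω₂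
end

section
/- Let γ > 0, λ > 0, n ≥ 1, ε > 0, α ∈ (0,1), and let X_1,…,X_n ∈ ℝ^d with ‖X_i‖₁ ≤ 1 and Y_1,…,Y_n ∈ ℝ. Set G(μ,β) = F_γ(μ,β) + (λ/2)‖β‖₂² + μ²/√n. Let b ∈ ℝ^{d+1} satisfy ‖b‖₁ ≤ 4(d+1)·log((d+1)/α)/ε. If ω₁ = (μ₁,β₁) minimizes G over ℝ × ℝ^d and ω₂ = (μ₂,β₂) minimizes G(μ,β) + ⟨b,(μ,β)⟩/n over ℝ × ℝ^d, then ‖ω₁ − ω₂‖₂ ≤ 4(d+1)·log((d+1)/α) / (n·min(λ, 2/√n)·ε). -/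
/-!
Both objectives are `min λ (2/√n)`-strongly convex in the Euclidean coordinates
`(μ, β) ∈ ℝ^{d+1}`: the Huber function is convex, being the supremum
`ρ_γ(s) = max_{|a| ≤ 1} (a s − γ a²/2)` of affine functions, and the penalty
`(λ/2)‖β‖² + μ²/√n` is the quadratic form `diag(2/√n, λ, …, λ) / 2`. At the minimizer `x` of an
`m`-strongly convex `f`, `f y − f x ≥ (m/2)‖y − x‖²`. Adding this for `f` at `ω₁` and for
`f + ℓ` at `ω₂`, with `ℓ = ⟨b, ·⟩/n`, gives `m‖ω₁ − ω₂‖² ≤ ℓ(ω₁ − ω₂) ≤ ‖b‖₂/n · ‖ω₁ − ω₂‖`,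
and `‖b‖₂ ≤ ‖b‖₁`.
-/

open scoped BigOperators

/-- The Huber function `ρ_γ`. -/
noncomputable def huber (γ t : ℝ) : ℝ :=
  if |t| ≤ γ then t ^ 2 / (2 * γ) else |t| - γ / 2

/-- The smoothed median-regression loss
`F_γ(μ,β) = (1/n) Σ_{i=1}^n ρ_γ(μ + ⟨X_i,β⟩ − Y_i)`. -/
noncomputable def smoothedLoss {n d : ℕ} (γ : ℝ) (X : Fin n → Fin d → ℝ)
    (Y : Fin n → ℝ) (p : ℝ × (Fin d → ℝ)) : ℝ :=
  (1 / (n : ℝ)) * ∑ i, huber γ (p.1 + (∑ j, X i j * p.2 j) - Y i)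

open Set

section Huber

variable {γ : ℝ}

lemma mul_sub_le_huber (hγ : 0 < γ) {a : ℝ} (ha : |a| ≤ 1) (s : ℝ) :
    a * s - γ * a ^ 2 / 2 ≤ huber γ s := by
  unfold huber
  split_ifs with hs
  · have : s ^ 2 / (2 * γ) - (a * s - γ * a ^ 2 / 2) = (s - γ * a) ^ 2 / (2 * γ) := by
      field_simp; ring
    nlinarith [show 0 ≤ (s - γ * a) ^ 2 / (2 * γ) by positivity]
  · rw [not_le] at hs
    have : a * s ≤ |a| * |s| := (le_abs_self _).trans (abs_mul a s).le
    nlinarith [mul_nonneg (sub_nonneg.2 hs.le) (sub_nonneg.2 ha), sq_abs a,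
      mul_nonneg hγ.le (sq_nonneg (1 - |a|)), abs_nonneg a]

lemma exists_huber_eq (hγ : 0 < γ) (s : ℝ) :
    ∃ a, |a| ≤ 1 ∧ huber γ s = a * s - γ * a ^ 2 / 2 := by
  by_cases hs : |s| ≤ γ
  · refine ⟨s / γ, ?_, ?_⟩
    · rwa [abs_div, abs_of_pos hγ, div_le_one hγ]
    · rw [huber, if_pos hs]; field_simp; ring
  · have hs0 : s ≠ 0 := abs_pos.1 (hγ.trans (not_le.1 hs))
    refine ⟨s / |s|, by rw [abs_div, abs_abs, div_self (abs_ne_zero.2 hs0)], ?_⟩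
    rw [huber, if_neg hs, div_pow, sq_abs, div_self (pow_ne_zero 2 hs0), div_mul_eq_mul_div,
      ← sq, ← sq_abs, sq, mul_self_div_self, mul_one]

lemma convexOn_huber (hγ : 0 < γ) : ConvexOn ℝ univ (huber γ) := by
  refine ⟨convex_univ, fun x _ y _ a b ha hb hab => ?_⟩
  obtain ⟨c, hc, hxy⟩ := exists_huber_eq hγ (a • x + b • y)
  have hx := mul_le_mul_of_nonneg_left (mul_sub_le_huber hγ hc x) ha
  have hy := mul_le_mul_of_nonneg_left (mul_sub_le_huber hγ hc y) hb
  rw [hxy, smul_eq_mul, smul_eq_mul, smul_eq_mul, smul_eq_mul]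
  linear_combination hx + hy + (γ * c ^ 2 / 2) * hab

end Huber

theorem ConvexOn.sum {𝕜 E β ι : Type*} [Semiring 𝕜] [PartialOrder 𝕜] [AddCommMonoid E]
    [AddCommMonoid β] [PartialOrder β] [IsOrderedAddMonoid β] [SMul 𝕜 E] [Module 𝕜 β]
    {s : Set E} (hs : Convex 𝕜 s) (t : Finset ι) {f : ι → E → β}
    (hf : ∀ i ∈ t, ConvexOn 𝕜 s (f i)) : ConvexOn 𝕜 s fun x => ∑ i ∈ t, f i x := by
  classical
  induction t using Finset.induction_on with
  | empty => simpa using convexOn_const (0 : β) hs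
  | insert i t hi ih =>
    simp_rw [Finset.sum_insert hi]
    exact (hf i (t.mem_insert_self i)).add (ih fun j hj => hf j (Finset.mem_insert_of_mem hj))

lemma convexOn_smoothedLoss {n d : ℕ} {γ : ℝ} (hγ : 0 < γ) (X : Fin n → Fin d → ℝ)
    (Y : Fin n → ℝ) : ConvexOn ℝ univ (smoothedLoss γ X Y) := by
  let residual (i : Fin n) : ℝ × (Fin d → ℝ) →ₗ[ℝ] ℝ :=
    (LinearMap.fst ℝ ℝ _) + (∑ j, X i j • LinearMap.proj j) ∘ₗ LinearMap.snd ℝ ℝ _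
  have hi (i : Fin n) : ConvexOn ℝ univ
      fun p : ℝ × (Fin d → ℝ) => huber γ (p.1 + ∑ j, X i j * p.2 j - Y i) := by
    have := (((convexOn_huber hγ).translate_right (-Y i)).comp_linearMap (residual i))
    simp only [preimage_univ] at this
    refine this.congr fun p _ => ?_
    simp [residual, sub_eq_neg_add]
  exact (ConvexOn.sum convex_univ _ fun i _ => hi i).smul (by positivity)

lemma StrongConvexOn.add_convexOn {E : Type*} [NormedAddCommGroup E] [NormedSpace ℝ E]
    {s : Set E} {m : ℝ} {f g : E → ℝ} (hf : StrongConvexOn s m f) (hg : ConvexOn ℝ s g) :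
    StrongConvexOn s m (f + g) := by
  simpa [StrongConvexOn] using hf.add hg.uniformConvexOn_zero

lemma strongConvexOn_sum_mul_sq {ι : Type*} [Fintype ι] {w : ι → ℝ} {m : ℝ}
    (hw : ∀ i, m ≤ w i) :
    StrongConvexOn univ m fun v : EuclideanSpace ℝ ι => ∑ i, w i / 2 * v i ^ 2 := by
  rw [strongConvexOn_iff_convex]
  have hi (i : ι) : ConvexOn ℝ univ fun v : EuclideanSpace ℝ ι => (w i - m) / 2 * v i ^ 2 := by
    simpa using ((even_two.convexOn_pow (𝕜 := ℝ)).comp_linearMap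
      (EuclideanSpace.proj (𝕜 := ℝ) i).toLinearMap).smul
      (show 0 ≤ (w i - m) / 2 by linarith [hw i])
  refine (ConvexOn.sum convex_univ Finset.univ fun i _ => hi i).congr fun v _ => ?_
  simp only
  rw [EuclideanSpace.real_norm_sq_eq, Finset.mul_sum, ← Finset.sum_sub_distrib]
  exact Finset.sum_congr rfl fun i _ => by ring

section StrongConvexMin

variable {E : Type*} [NormedAddCommGroup E] [NormedSpace ℝ E] {s : Set E} {m : ℝ} {f : E → ℝ}
  {x y : E}

lemma StrongConvexOn.sq_norm_sub_le_of_isMinOn (hf : StrongConvexOn s m f) (hx : x ∈ s)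
    (hy : y ∈ s) (hmin : IsMinOn f s x) : m / 2 * ‖x - y‖ ^ 2 ≤ f y - f x := by
  have hineq (t : ℝ) (ht : t ∈ Ioo (0 : ℝ) 1) : (1 - t) * (m / 2 * ‖x - y‖ ^ 2) ≤ f y - f x := by
    have hconv := hf.2 hx hy (sub_nonneg.2 ht.2.le) ht.1.le (sub_add_cancel 1 t)
    have hle : f x ≤ f ((1 - t) • x + t • y) :=
      hmin (hf.1 hx hy (sub_nonneg.2 ht.2.le) ht.1.le (sub_add_cancel 1 t))
    simp only [smul_eq_mul] at hconv
    refine le_of_mul_le_mul_left ?_ ht.1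
    nlinarith
  have hlim : Filter.Tendsto (fun t : ℝ => (1 - t) * (m / 2 * ‖x - y‖ ^ 2))
      (nhdsWithin 0 (Ioo 0 1)) (nhds (m / 2 * ‖x - y‖ ^ 2)) := by
    have : Continuous fun t : ℝ => (1 - t) * (m / 2 * ‖x - y‖ ^ 2) := by fun_prop
    simpa using (this.tendsto 0).mono_left nhdsWithin_le_nhds
  have : (nhdsWithin (0 : ℝ) (Ioo 0 1)).NeBot := by
    simpa using left_nhdsWithin_Ioo_neBot (zero_lt_one' ℝ)
  exact le_of_tendsto hlim (eventually_nhdsWithin_of_forall hineq)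

lemma StrongConvexOn.mul_norm_sub_le_of_isMinOn_add (hf : StrongConvexOn univ m f)
    (ℓ : StrongDual ℝ E) (hx : IsMinOn f univ x) (hy : IsMinOn (f + ⇑ℓ) univ y) :
    m * ‖x - y‖ ≤ ‖ℓ‖ := by
  have hfx := hf.sq_norm_sub_le_of_isMinOn (mem_univ x) (mem_univ y) hx
  have hfy := (hf.add_convexOn (ℓ.toLinearMap.convexOn convex_univ)).sq_norm_sub_le_of_isMinOn
    (mem_univ y) (mem_univ x) hy
  have hℓ : ℓ x - ℓ y ≤ ‖ℓ‖ * ‖x - y‖ := by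
    rw [← map_sub]; exact (Real.le_norm_self _).trans (ℓ.le_opNorm _)
  rw [norm_sub_rev] at hfy
  simp only [Pi.add_apply, ContinuousLinearMap.coe_coe] at hfy
  have hsq : m * ‖x - y‖ * ‖x - y‖ ≤ ‖ℓ‖ * ‖x - y‖ := by nlinarith
  rcases (norm_nonneg (x - y)).eq_or_lt with h | h
  · simp [← h]
  · exact le_of_mul_le_mul_right hsq h

end StrongConvexMin

lemma IsMinOn.univ_comp_symm {α β γ : Type*} [Preorder γ] {f : α → γ} {x : α}
    (h : IsMinOn f univ x) (e : α ≃ β) : IsMinOn (f ∘ e.symm) univ (e x) :=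
  isMinOn_univ_iff.2 fun v => by simpa using isMinOn_univ_iff.1 h (e.symm v)

lemma EuclideanSpace.norm_toLp_le_sum_abs {ι : Type*} [Fintype ι] (b : ι → ℝ) :
    ‖WithLp.toLp 2 b‖ ≤ ∑ i, |b i| := by
  rw [EuclideanSpace.norm_eq]
  refine Real.sqrt_le_iff.2 ⟨by positivity, ?_⟩
  simpa using Finset.sum_sq_le_sq_sum_of_nonneg (s := Finset.univ) fun i _ => abs_nonneg (b i)

noncomputable def pairEquiv (d : ℕ) : (ℝ × (Fin d → ℝ)) ≃ₗ[ℝ] EuclideanSpace ℝ (Fin (d + 1)) :=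
  (Fin.consLinearEquiv ℝ fun _ => ℝ).trans (WithLp.linearEquiv 2 ℝ _).symm

section pairEquiv

variable {d : ℕ}

lemma pairEquiv_apply (p : ℝ × (Fin d → ℝ)) :
    pairEquiv d p = WithLp.toLp 2 (Fin.cons p.1 p.2 : Fin (d + 1) → ℝ) := rfl

@[simp]
lemma pairEquiv_symm_apply (v : EuclideanSpace ℝ (Fin (d + 1))) :
    (pairEquiv d).symm v = (v 0, fun j => v j.succ) := rfl

lemma norm_pairEquiv (p : ℝ × (Fin d → ℝ)) :
    ‖pairEquiv d p‖ = √(p.1 ^ 2 + ∑ j, p.2 j ^ 2) := by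
  simp [pairEquiv_apply, EuclideanSpace.norm_eq, Fin.sum_univ_succ]

lemma inner_toLp_pairEquiv (b : Fin (d + 1) → ℝ) (p : ℝ × (Fin d → ℝ)) :
    inner ℝ (WithLp.toLp 2 b) (pairEquiv d p) = b 0 * p.1 + ∑ j, b j.succ * p.2 j := by
  simp [pairEquiv_apply, PiLp.inner_apply, Fin.sum_univ_succ, mul_comm]

end pairEquiv

noncomputable def penalizedLoss {n d : ℕ} (γ lam : ℝ) (X : Fin n → Fin d → ℝ) (Y : Fin n → ℝ)
    (p : ℝ × (Fin d → ℝ)) : ℝ :=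
  smoothedLoss γ X Y p + lam / 2 * ∑ j, (p.2 j) ^ 2 + p.1 ^ 2 / √n

lemma strongConvexOn_penalizedLoss_comp {n d : ℕ} {γ : ℝ} (hγ : 0 < γ) (lam : ℝ)
    (X : Fin n → Fin d → ℝ) (Y : Fin n → ℝ) :
    StrongConvexOn univ (min lam (2 / √n)) (penalizedLoss γ lam X Y ∘ (pairEquiv d).symm) := by
  let w : Fin (d + 1) → ℝ := Fin.cons (2 / √n) fun _ => lam
  have hw (i : Fin (d + 1)) : min lam (2 / √n) ≤ w i :=
    Fin.cases (min_le_right _ _) (fun _ => min_le_left _ _) i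
  have hsplit : penalizedLoss γ lam X Y ∘ (pairEquiv d).symm =
      (fun v : EuclideanSpace ℝ (Fin (d + 1)) => ∑ i, w i / 2 * v i ^ 2)
        + smoothedLoss γ X Y ∘ (pairEquiv d).symm := by
    funext v
    simp only [penalizedLoss, Function.comp_apply, Pi.add_apply, pairEquiv_symm_apply,
      Fin.sum_univ_succ, w, Fin.cons_zero, Fin.cons_succ, Finset.mul_sum]
    ring
  rw [hsplit]
  exact (strongConvexOn_sum_mul_sq hw).add_convexOn
    ((convexOn_smoothedLoss hγ X Y).comp_linearMap (pairEquiv d).symm.toLinearMap)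

theorem algorithm1_accuracy_general {n d : ℕ} (hn : 1 ≤ n)
    (γ lam ε α : ℝ) (hγ : 0 < γ) (hlam : 0 < lam)
    (X : Fin n → Fin d → ℝ) (Y : Fin n → ℝ)
    (b : Fin (d + 1) → ℝ)
    (hb : ∑ i, |b i| ≤ 4 * (d + 1) * Real.log ((d + 1) / α) / ε)
    (ω₁ ω₂ : ℝ × (Fin d → ℝ))
    (hω₁ : IsMinOn
      (fun p : ℝ × (Fin d → ℝ) =>
        smoothedLoss γ X Y p + lam / 2 * ∑ j, (p.2 j) ^ 2
          + p.1 ^ 2 / Real.sqrt n)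
      Set.univ ω₁)
    (hω₂ : IsMinOn
      (fun p : ℝ × (Fin d → ℝ) =>
        (smoothedLoss γ X Y p + lam / 2 * ∑ j, (p.2 j) ^ 2
            + p.1 ^ 2 / Real.sqrt n)
          + (b 0 * p.1 + ∑ j : Fin d, b j.succ * p.2 j) / n)
      Set.univ ω₂) :
    Real.sqrt ((ω₁.1 - ω₂.1) ^ 2 + ∑ j, (ω₁.2 j - ω₂.2 j) ^ 2) ≤
      4 * (d + 1) * Real.log ((d + 1) / α)
        / (n * min lam (2 / Real.sqrt n) * ε) := by
  have hm : 0 < min lam (2 / √n) := lt_min hlam (by positivity)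
  let ℓ : StrongDual ℝ (EuclideanSpace ℝ (Fin (d + 1))) :=
    (n : ℝ)⁻¹ • innerSL ℝ (WithLp.toLp 2 b)
  have hmin₁ : IsMinOn (penalizedLoss γ lam X Y ∘ (pairEquiv d).symm) univ (pairEquiv d ω₁) :=
    hω₁.univ_comp_symm (pairEquiv d).toEquiv
  have hmin₂ : IsMinOn (penalizedLoss γ lam X Y ∘ (pairEquiv d).symm + ⇑ℓ) univ
      (pairEquiv d ω₂) := by
    convert hω₂.univ_comp_symm (pairEquiv d).toEquiv using 1
    · funext v
      obtain ⟨p, rfl⟩ := (pairEquiv d).surjective v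
      simp [ℓ, penalizedLoss, inner_toLp_pairEquiv, div_eq_inv_mul]
    · rfl
  have hℓ : ‖ℓ‖ ≤ (∑ i, |b i|) / n := by
    rw [norm_smul, innerSL_apply_norm, norm_inv, RCLike.norm_natCast, inv_mul_eq_div]
    gcongr
    exact EuclideanSpace.norm_toLp_le_sum_abs b
  have hdist := (strongConvexOn_penalizedLoss_comp hγ lam X Y).mul_norm_sub_le_of_isMinOn_add
    ℓ hmin₁ hmin₂
  have hnorm : ‖pairEquiv d ω₁ - pairEquiv d ω₂‖ =
      √((ω₁.1 - ω₂.1) ^ 2 + ∑ j, (ω₁.2 j - ω₂.2 j) ^ 2) := by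
    rw [← map_sub, norm_pairEquiv]; rfl
  calc √((ω₁.1 - ω₂.1) ^ 2 + ∑ j, (ω₁.2 j - ω₂.2 j) ^ 2)
      ≤ ‖ℓ‖ / min lam (2 / √n) := by rw [← hnorm]; exact (le_div_iff₀' hm).2 hdist
    _ ≤ (∑ i, |b i|) / n / min lam (2 / √n) := by gcongr
    _ ≤ 4 * (d + 1) * Real.log ((d + 1) / α) / ε / n / min lam (2 / √n) := by gcongr
    _ = 4 * (d + 1) * Real.log ((d + 1) / α) / (n * min lam (2 / √n) * ε) := by ring

/-- Accuracy bound for Algorithm 1: if `ω₁` minimizes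
`G(μ,β) = F_γ(μ,β) + (λ/2)‖β‖₂² + μ²/√n` and `ω₂` minimizes
`G(μ,β) + ⟨b,(μ,β)⟩/n` where `‖b‖₁ ≤ 4(d+1)·log((d+1)/α)/ε`, then
`‖ω₁ − ω₂‖₂ ≤ 4(d+1)·log((d+1)/α) / (n·min(λ, 2/√n)·ε)`. -/
theorem algorithm1_accuracy {n d : ℕ} (hn : 1 ≤ n)
    (γ lam ε α : ℝ) (hγ : 0 < γ) (hlam : 0 < lam) (hε : 0 < ε)
    (hα : α ∈ Set.Ioo (0 : ℝ) 1)
    (X : Fin n → Fin d → ℝ) (hX : ∀ i, ∑ j, |X i j| ≤ 1) (Y : Fin n → ℝ)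
    (b : Fin (d + 1) → ℝ)
    (hb : ∑ i, |b i| ≤ 4 * (d + 1) * Real.log ((d + 1) / α) / ε)
    (ω₁ ω₂ : ℝ × (Fin d → ℝ))
    (hω₁ : IsMinOn
      (fun p : ℝ × (Fin d → ℝ) =>
        smoothedLoss γ X Y p + lam / 2 * ∑ j, (p.2 j) ^ 2
          + p.1 ^ 2 / Real.sqrt n)
      Set.univ ω₁)
    (hω₂ : IsMinOn
      (fun p : ℝ × (Fin d → ℝ) =>
        (smoothedLoss γ X Y p + lam / 2 * ∑ j, (p.2 j) ^ 2
            + p.1 ^ 2 / Real.sqrt n)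
          + (b 0 * p.1 + ∑ j : Fin d, b j.succ * p.2 j) / n)
      Set.univ ω₂) :
    Real.sqrt ((ω₁.1 - ω₂.1) ^ 2 + ∑ j, (ω₁.2 j - ω₂.2 j) ^ 2) ≤
      4 * (d + 1) * Real.log ((d + 1) / α)
        / (n * min lam (2 / Real.sqrt n) * ε) :=
  algorithm1_accuracy_general hn γ lam ε α hγ hlam X Y b hb ω₁ ω₂ hω₁ hω₂
end

section
/- Let n ≥ 1, and let D = ((X_1,Y_1),…,(X_n,Y_n)) and D' = ((X'_1,Y'_1),…,(X'_n,Y'_n)) be two datasets with X_i, X'_i ∈ ℝ^d satisfying ‖X_i‖₁ ≤ 1 and ‖X'_i‖₁ ≤ 1, and Y_i, Y'_i ∈ ℝ, such that (X_i,Y_i) = (X'_i,Y'_i) for all but one index i. Then for every (μ,β) ∈ ℝ × ℝ^d and every coordinate k ∈ {1,…,d}, the forward directional derivatives along e_k of the two empirical losses satisfy |d_{e_k^+}F_D(μ,β) − d_{e_k^+}F_{D'}(μ,β)| ≤ 2/n. -/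
/-!
Along `e_k` the residual `r_i = μ + ⟨X_i, β⟩ - Y_i` of record `i` moves as `r_i + τ X_{ik}`,
so the forward derivative of `F_D` is the average of the one-sided derivatives of
`τ ↦ |r_i + τ X_{ik}|` at `0⁺`, each of absolute value `|X_{ik}| ≤ ‖X_i‖₁ ≤ 1`. Neighbouring
datasets share all but one summand, so the two averages differ by at most `(1 + 1)/n`.
-/

open scoped BigOperators
open Filter

/-- The median-regression loss `F_D(μ,β) = (1/n) Σ_{i=1}^n |μ + ⟨X_i,β⟩ − Y_i|`. -/
noncomputable def medLoss {n d : ℕ} (X : Fin n → Fin d → ℝ) (Y : Fin n → ℝ)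
    (μ : ℝ) (β : Fin d → ℝ) : ℝ :=
  (1 / (n : ℝ)) * ∑ i, |μ + (∑ j, X i j * β j) - Y i|

open Topology

noncomputable def absRightDeriv (a c : ℝ) : ℝ :=
  if a = 0 then |c| else SignType.sign a * c

lemma abs_absRightDeriv (a c : ℝ) : |absRightDeriv a c| = |c| := by
  unfold absRightDeriv
  split_ifs with ha
  · exact abs_abs c
  · rcases lt_or_gt_of_ne ha with h | h <;> simp [h, sign_neg, sign_pos]

lemma tendsto_abs_add_mul_slope (a c : ℝ) :
    Tendsto (fun τ : ℝ => (|a + τ * c| - |a|) / τ) (𝓝[>] 0) (𝓝 (absRightDeriv a c)) := by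
  unfold absRightDeriv
  split_ifs with ha
  · subst ha
    refine tendsto_const_nhds.congr' ?_
    filter_upwards [self_mem_nhdsWithin] with τ (hτ : 0 < τ)
    rw [zero_add, abs_zero, sub_zero, abs_mul, abs_of_pos hτ, mul_div_cancel_left₀ _ hτ.ne']
  · have hderiv : HasDerivAt (fun τ : ℝ => |a + τ * c|) (SignType.sign a * c) 0 := by
      have hline : HasDerivAt (fun τ : ℝ => a + τ * c) c 0 := by
        simpa using ((hasDerivAt_id' (0 : ℝ)).mul_const c).const_add a
      simpa [Function.comp_def] using
        (hasDerivAt_abs (x := a + 0 * c) (by simpa using ha)).comp (0 : ℝ) hline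
    refine hderiv.tendsto_slope_zero_right.congr fun τ => ?_
    simp [div_eq_inv_mul]

section MedLoss

variable {n d : ℕ} (X : Fin n → Fin d → ℝ) (Y : Fin n → ℝ) (μ : ℝ) (β : Fin d → ℝ) (k : Fin d)

lemma medLoss_add_smul_single (τ : ℝ) :
    medLoss X Y μ (β + τ • Pi.single k 1) =
      1 / (n : ℝ) * ∑ i, |(μ + ∑ j, X i j * β j - Y i) + τ * X i k| := by
  unfold medLoss
  congr 2 with i
  simp only [Pi.add_apply, Pi.smul_apply, Pi.single_apply, smul_eq_mul, mul_ite, mul_one,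
    mul_zero, mul_add, Finset.sum_add_distrib, Finset.sum_ite_eq', Finset.mem_univ, ↓reduceIte]
  congr 1
  ring

noncomputable def medLossRightDeriv : ℝ :=
  1 / (n : ℝ) * ∑ i, absRightDeriv (μ + ∑ j, X i j * β j - Y i) (X i k)

lemma tendsto_medLoss_slope :
    Tendsto (fun τ : ℝ => (medLoss X Y μ (β + τ • Pi.single k 1) - medLoss X Y μ β) / τ)
      (𝓝[>] 0) (𝓝 (medLossRightDeriv X Y μ β k)) := by
  have hslope : ∀ τ : ℝ,
      (medLoss X Y μ (β + τ • Pi.single k 1) - medLoss X Y μ β) / τ =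
        1 / (n : ℝ) * ∑ i,
          (|(μ + ∑ j, X i j * β j - Y i) + τ * X i k| - |μ + ∑ j, X i j * β j - Y i|) / τ := by
    intro τ
    rw [medLoss_add_smul_single, medLoss, ← mul_sub, ← Finset.sum_sub_distrib, mul_div_assoc,
      Finset.sum_div]
  simp only [hslope]
  exact (tendsto_finsetSum _ fun i _ => tendsto_abs_add_mul_slope _ _).const_mul _

end MedLoss

lemma abs_sum_sub_sum_le_of_eq_of_ne {ι : Type*} [Fintype ι] {f g : ι → ℝ} (i₀ : ι)
    (h : ∀ i, i ≠ i₀ → f i = g i) :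
    |∑ i, f i - ∑ i, g i| ≤ |f i₀| + |g i₀| := by
  rw [← Finset.sum_sub_distrib,
    Finset.sum_eq_single i₀ (fun i _ hi => sub_eq_zero.2 (h i hi))
      (fun h => absurd (Finset.mem_univ i₀) h)]
  exact abs_sub _ _

lemma abs_le_of_sum_abs_le_one {ι : Type*} [Fintype ι] {x : ι → ℝ} (hx : ∑ j, |x j| ≤ 1) (k : ι) :
    |x k| ≤ 1 :=
  (Finset.single_le_sum (fun j _ => abs_nonneg (x j)) (Finset.mem_univ k)).trans hx

lemma abs_medLossRightDeriv_sub_le {n d : ℕ} {X X' : Fin n → Fin d → ℝ} {Y Y' : Fin n → ℝ}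
    (hX : ∀ i, ∑ j, |X i j| ≤ 1) (hX' : ∀ i, ∑ j, |X' i j| ≤ 1)
    {i₀ : Fin n} (hneighbor : ∀ i : Fin n, i ≠ i₀ → X i = X' i ∧ Y i = Y' i)
    (μ : ℝ) (β : Fin d → ℝ) (k : Fin d) :
    |medLossRightDeriv X Y μ β k - medLossRightDeriv X' Y' μ β k| ≤ 2 / n := by
  have hsum := abs_sum_sub_sum_le_of_eq_of_ne
    (f := fun i => absRightDeriv (μ + ∑ j, X i j * β j - Y i) (X i k))
    (g := fun i => absRightDeriv (μ + ∑ j, X' i j * β j - Y' i) (X' i k)) i₀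
    (fun i hi => by rw [(hneighbor i hi).1, (hneighbor i hi).2])
  simp only [abs_absRightDeriv] at hsum
  rw [medLossRightDeriv, medLossRightDeriv, ← mul_sub, abs_mul,
    abs_of_nonneg (by positivity : (0 : ℝ) ≤ 1 / n), one_div_mul_eq_div]
  gcongr
  linarith [abs_le_of_sum_abs_le_one (hX i₀) k, abs_le_of_sum_abs_le_one (hX' i₀) k]

theorem medLoss_directional_deriv_sensitivity_general {n d : ℕ}
    (X X' : Fin n → Fin d → ℝ) (Y Y' : Fin n → ℝ)
    (hX : ∀ i, ∑ j, |X i j| ≤ 1) (hX' : ∀ i, ∑ j, |X' i j| ≤ 1)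
    (hneighbor : ∃ i₀ : Fin n, ∀ i : Fin n, i ≠ i₀ → X i = X' i ∧ Y i = Y' i)
    (μ : ℝ) (β : Fin d → ℝ) (k : Fin d) :
    ∃ D D' : ℝ,
      Tendsto
        (fun τ : ℝ =>
          (medLoss X Y μ (β + τ • (Pi.single k 1 : Fin d → ℝ))
            - medLoss X Y μ β) / τ)
        (nhdsWithin 0 (Set.Ioi 0)) (nhds D) ∧
      Tendsto
        (fun τ : ℝ =>
          (medLoss X' Y' μ (β + τ • (Pi.single k 1 : Fin d → ℝ))
            - medLoss X' Y' μ β) / τ)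
        (nhdsWithin 0 (Set.Ioi 0)) (nhds D') ∧
      |D - D'| ≤ 2 / n := by
  obtain ⟨i₀, hi₀⟩ := hneighbor
  exact ⟨_, _, tendsto_medLoss_slope X Y μ β k, tendsto_medLoss_slope X' Y' μ β k,
    abs_medLossRightDeriv_sub_le hX hX' hi₀ μ β k⟩

/-- Low sensitivity of the forward coordinate directional derivative: for two
datasets of size `n` with `‖X_i‖₁ ≤ 1`, `‖X'_i‖₁ ≤ 1`, differing in at most one
record, the forward directional derivatives along `e_k` of the two empirical
losses (which exist, by convexity) differ by at most `2/n` at every point. -/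
theorem medLoss_directional_deriv_sensitivity {n d : ℕ} (hn : 1 ≤ n)
    (X X' : Fin n → Fin d → ℝ) (Y Y' : Fin n → ℝ)
    (hX : ∀ i, ∑ j, |X i j| ≤ 1) (hX' : ∀ i, ∑ j, |X' i j| ≤ 1)
    (hneighbor : ∃ i₀ : Fin n, ∀ i : Fin n, i ≠ i₀ → X i = X' i ∧ Y i = Y' i)
    (μ : ℝ) (β : Fin d → ℝ) (k : Fin d) :
    ∃ D D' : ℝ,
      Tendsto
        (fun τ : ℝ =>
          (medLoss X Y μ (β + τ • (Pi.single k 1 : Fin d → ℝ))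
            - medLoss X Y μ β) / τ)
        (nhdsWithin 0 (Set.Ioi 0)) (nhds D) ∧
      Tendsto
        (fun τ : ℝ =>
          (medLoss X' Y' μ (β + τ • (Pi.single k 1 : Fin d → ℝ))
            - medLoss X' Y' μ β) / τ)
        (nhdsWithin 0 (Set.Ioi 0)) (nhds D') ∧
      |D - D'| ≤ 2 / n :=
  medLoss_directional_deriv_sensitivity_general X X' Y Y' hX hX' hneighbor μ β k
end
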